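/- Let m_0, ..., m_{N-1} ∈ L^∞(T) and define A_{k,l}(z) = (1/N) Σ_{w^N = z} w^{-l} m_k(w). Then the matrix (1/√N)(m_k(e^{2πil/N} z))_{k,l} is unitary for a.a. z if and only if the matrix A(z) = (A_{k,l}(z)) is unitary for a.a. z ∈ T. In fact, Σ_{k=0}^{N-1} A_{i,k}(z) conj(A_{j,k}(z)) = (1/N) Σ_{w^N = z} m_i(w) conj(m_j(w)) for a.a. z. -/

import Mathlib

/-! The solutions of `w ^ N = z` are `z₀ * ζ ^ j`, `j < N`, for any one of them `z₀` and
`ζ = exp (2π / N)`. Since `∑ₗ u ^ l = N` or `0` according as the `N`-th root of unity `u` is `1` or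
not, expanding `∑ₗ A i l z * conj (A j l z)` leaves only the diagonal terms: it is the average of
`m i * conj (m j)` over the roots of `z`. Over the roots `ζ ^ l * z` of `z ^ N` that average is
also the `(i, j)` entry of `B z * star (B z)`, where `B z` is the first matrix of the statement,
so `B z` is unitary iff `A (z ^ N)` is. Finally `z ↦ z ^ N` preserves Haar measure and has a
measurable section `nthRoot N` that pulls null sets back to null sets, hence an almost-everywhere
property holds at `z ^ N` iff it holds at `z`. -/

open MeasureTheory ComplexConjugate

noncomputable instance : MeasurableSpace Circle := borel Circle
instance : BorelSpace Circle := ⟨rfl⟩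

open Complex Function Set

theorem sum_range_pow_eq_ite_of_pow_eq_one {K : Type*} [DivisionRing K] [DecidableEq K]
    {N : ℕ} {u : K} (hu : u ^ N = 1) :
    ∑ k ∈ Finset.range N, u ^ k = if u = 1 then (N : K) else 0 := by
  split_ifs with h
  · simp [h]
  · rw [geom_sum_eq h, hu, sub_self, zero_div]

theorem Matrix.mem_unitaryGroup_iff_of_mul_star_eq {n α : Type*} [Fintype n] [DecidableEq n]
    [CommRing α] [StarRing α] {U V : Matrix n n α} (h : U * star U = V * star V) :
    U ∈ Matrix.unitaryGroup n α ↔ V ∈ Matrix.unitaryGroup n α := by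
  rw [Matrix.mem_unitaryGroup_iff, Matrix.mem_unitaryGroup_iff, h]

namespace Circle

variable {N : ℕ}

theorem isPrimitiveRoot_exp_two_pi_div (hN : N ≠ 0) :
    IsPrimitiveRoot (exp (2 * Real.pi / N)) N := by
  refine IsPrimitiveRoot.of_map_of_injective (f := coeHom) ?_ coe_injective
  convert Complex.isPrimitiveRoot_exp N hN using 1
  change Complex.exp _ = _
  push_cast
  ring_nf

theorem injective_mul_pow {ζ : Circle} (hζ : IsPrimitiveRoot ζ N) (z₀ : Circle) :
    Injective fun j : Fin N => z₀ * ζ ^ (j : ℕ) :=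
  fun a b h => Fin.ext (hζ.pow_inj a.2 b.2 (mul_left_cancel h))

theorem setOf_pow_eq [NeZero N] {ζ : Circle} (hζ : IsPrimitiveRoot ζ N) {z₀ z : Circle}
    (hz : z₀ ^ N = z) :
    {w : Circle | w ^ N = z} = range fun j : Fin N => z₀ * ζ ^ (j : ℕ) := by
  ext w
  constructor
  · intro hw
    have hroot : ((z₀⁻¹ * w : Circle) : ℂ) ^ N = 1 := by
      rw [← coe_pow, mul_pow, inv_pow, hz, hw, inv_mul_cancel, coe_one]
    obtain ⟨j, hj, hζj⟩ :=
      (hζ.map_of_injective (f := coeHom) coe_injective).eq_pow_of_pow_eq_one hroot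
    exact ⟨⟨j, hj⟩, eq_inv_mul_iff_mul_eq.mp (coe_injective hζj)⟩
  · rintro ⟨j, rfl⟩
    rw [mem_ofPred_eq, mul_pow, hz, pow_right_comm, hζ.pow_eq_one, one_pow, mul_one]

theorem finsum_mem_setOf_pow_eq {M : Type*} [AddCommMonoid M] [NeZero N] {ζ : Circle}
    (hζ : IsPrimitiveRoot ζ N) {z₀ z : Circle} (hz : z₀ ^ N = z) (f : Circle → M) :
    ∑ᶠ w ∈ {w : Circle | w ^ N = z}, f w = ∑ j : Fin N, f (z₀ * ζ ^ (j : ℕ)) := by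
  rw [setOf_pow_eq hζ hz, finsum_mem_range (injective_mul_pow hζ z₀), finsum_eq_sum_of_fintype]

theorem sum_exp_mul_eq_finsum_mem_setOf_pow_eq [NeZero N] {M : Type*} [AddCommMonoid M]
    (f : Circle → M) (z : Circle) :
    ∑ l : Fin N, f (exp (2 * Real.pi * l / N) * z) = ∑ᶠ w ∈ {w : Circle | w ^ N = z ^ N}, f w := by
  rw [finsum_mem_setOf_pow_eq (isPrimitiveRoot_exp_two_pi_div (NeZero.ne N)) rfl]
  refine Finset.sum_congr rfl fun l _ => ?_
  rw [mul_comm z, ← exp_natCast_mul, mul_div_assoc', mul_comm (l : ℝ)]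

noncomputable def nthRoot (N : ℕ) (z : Circle) : Circle := exp (arg z / N)

theorem nthRoot_pow (hN : N ≠ 0) (z : Circle) : nthRoot N z ^ N = z := by
  rw [nthRoot, ← exp_natCast_mul, mul_div_cancel₀ _ (Nat.cast_ne_zero.mpr hN), exp_arg]

theorem measurable_nthRoot : Measurable (nthRoot N) := by
  unfold nthRoot
  fun_prop

theorem sum_zpow_mul_conj_sum_zpow (e : Fin N → Circle) (he : Injective e) {z : Circle}
    (hez : ∀ a, e a ^ N = z) (x y : Fin N → ℂ) :
    ∑ l : Fin N, (∑ a, (e a : ℂ) ^ (-(l : ℤ)) * x a) * conj (∑ a, (e a : ℂ) ^ (-(l : ℤ)) * y a)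
      = N * ∑ a, x a * conj (y a) := by
  have hterm (l : ℕ) (a b : Fin N) : (e a : ℂ) ^ (-(l : ℤ)) * conj ((e b : ℂ) ^ (-(l : ℤ)))
      = ((e a)⁻¹ * e b : Circle) ^ l := by
    rw [← coe_zpow, ← coe_zpow, ← coe_inv_eq_conj, ← coe_mul, ← coe_pow]
    congr 1
    rw [zpow_neg, zpow_neg, inv_inv, zpow_natCast, zpow_natCast, mul_pow, inv_pow]
  have hgeom (a b : Fin N) : ∑ l : Fin N, (((e a)⁻¹ * e b : Circle) : ℂ) ^ (l : ℕ)
      = if a = b then (N : ℂ) else 0 := by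
    rw [Fin.sum_univ_eq_sum_range (fun l => (((e a)⁻¹ * e b : Circle) : ℂ) ^ l),
      sum_range_pow_eq_ite_of_pow_eq_one]
    · simp only [coe_eq_one, inv_mul_eq_one, he.eq_iff]
    · rw [← coe_pow, mul_pow, inv_pow, hez, hez, inv_mul_cancel, coe_one]
  calc _ = ∑ a, ∑ b, x a * conj (y b) * ∑ l : Fin N, (((e a)⁻¹ * e b : Circle) : ℂ) ^ (l : ℕ) := by
        simp_rw [map_sum, map_mul, Finset.sum_mul_sum, Finset.mul_sum, ← hterm]
        rw [Finset.sum_comm]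
        refine Finset.sum_congr rfl fun a _ => ?_
        rw [Finset.sum_comm]
        exact Finset.sum_congr rfl fun b _ => Finset.sum_congr rfl fun l _ => by ring
    _ = N * ∑ a, x a * conj (y a) := by
        simp only [hgeom, mul_ite, mul_zero, Finset.sum_ite_eq, Finset.mem_univ, if_true,
          Finset.mul_sum]
        exact Finset.sum_congr rfl fun a _ => by ring

theorem sum_finsum_zpow_mul_conj_finsum_zpow (hN : N ≠ 0) (f g : Circle → ℂ) (z : Circle) :
    ∑ l : Fin N, (∑ᶠ w ∈ {w : Circle | w ^ N = z}, (w : ℂ) ^ (-(l : ℤ)) * f w) *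
        conj (∑ᶠ w ∈ {w : Circle | w ^ N = z}, (w : ℂ) ^ (-(l : ℤ)) * g w)
      = N * ∑ᶠ w ∈ {w : Circle | w ^ N = z}, f w * conj (g w) := by
  have := NeZero.mk hN
  have hζ := isPrimitiveRoot_exp_two_pi_div hN
  have hz := nthRoot_pow hN z
  simp only [finsum_mem_setOf_pow_eq hζ hz]
  refine sum_zpow_mul_conj_sum_zpow (z := z) _ (injective_mul_pow hζ _) (fun j => ?_) _ _
  exact (setOf_pow_eq hζ hz).ge (mem_range_self j)

section Haar

variable {μ : Measure Circle} [μ.IsHaarMeasure]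

theorem measurePreserving_pow (hN : N ≠ 0) : MeasurePreserving (· ^ N) μ μ :=
  MonoidHom.measurePreserving (f := powMonoidHom N) (continuous_pow N)
    (fun z => ⟨nthRoot N z, nthRoot_pow hN z⟩) rfl

theorem quasiMeasurePreserving_nthRoot (hN : N ≠ 0) :
    Measure.QuasiMeasurePreserving (nthRoot N) μ μ := by
  have := NeZero.mk hN
  refine ⟨measurable_nthRoot, Measure.AbsolutelyContinuous.mk fun t ht hμt => ?_⟩
  have hpre : MeasurableSet (nthRoot N ⁻¹' t) := measurable_nthRoot ht
  rw [Measure.map_apply measurable_nthRoot ht,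
    ← (measurePreserving_pow hN).measure_preimage hpre.nullMeasurableSet]
  -- `nthRoot N (w ^ N)` is `w` times an `N`-th root of unity, so `N` translates of `t` cover.
  have hcover : (· ^ N) ⁻¹' (nthRoot N ⁻¹' t) ⊆
      ⋃ j : Fin N, (fun w => exp (2 * Real.pi / N) ^ (j : ℕ) * w) ⁻¹' t := by
    intro w hw
    obtain ⟨j, hj⟩ : nthRoot N (w ^ N) ∈
        range fun j : Fin N => w * exp (2 * Real.pi / N) ^ (j : ℕ) :=
      setOf_pow_eq (isPrimitiveRoot_exp_two_pi_div hN) rfl ▸ nthRoot_pow hN (w ^ N)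
    refine mem_iUnion.mpr ⟨j, ?_⟩
    rw [mem_preimage, mul_comm]
    exact (congrArg (· ∈ t) hj).mpr hw
  exact measure_mono_null hcover
    (measure_iUnion_null fun j => (measure_preimage_mul μ _ t).trans hμt)

theorem ae_comp_pow_iff (hN : N ≠ 0) {P : Circle → Prop} :
    (∀ᵐ z ∂μ, P (z ^ N)) ↔ ∀ᵐ z ∂μ, P z :=
  ⟨fun h => by simpa only [nthRoot_pow hN] using (quasiMeasurePreserving_nthRoot hN).ae h,
    (measurePreserving_pow hN).quasiMeasurePreserving.ae⟩

end Haar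

end Circle

theorem loop_matrix_unitary_iff_general (N : ℕ) (hN : 2 ≤ N) (μ : Measure Circle) [μ.IsHaarMeasure]
    (m : Fin N → Circle → ℂ)
    (A : Fin N → Fin N → Circle → ℂ)
    (hA : ∀ k l z, A k l z
      = (N : ℂ)⁻¹ * ∑ᶠ w ∈ {w : Circle | w ^ N = z}, (w : ℂ) ^ (-(l : ℤ)) * m k w) :
    ((∀ᵐ z ∂μ, (Matrix.of fun k l : Fin N =>
          ((Real.sqrt N : ℂ))⁻¹ * m k (Circle.exp (2 * Real.pi * l / N) * z))
        ∈ Matrix.unitaryGroup (Fin N) ℂ) ↔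
      (∀ᵐ z ∂μ, (Matrix.of fun k l : Fin N => A k l z) ∈ Matrix.unitaryGroup (Fin N) ℂ)) ∧
    ∀ (i j : Fin N) (z : Circle), ∑ k, A i k z * conj (A j k z)
      = (N : ℂ)⁻¹ * ∑ᶠ w ∈ {w : Circle | w ^ N = z}, m i w * conj (m j w) := by
  have hN₀ : N ≠ 0 := by omega
  have := NeZero.mk hN₀
  have gram (i j : Fin N) (z : Circle) : ∑ k, A i k z * conj (A j k z)
      = (N : ℂ)⁻¹ * ∑ᶠ w ∈ {w : Circle | w ^ N = z}, m i w * conj (m j w) := by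
    simp only [hA, map_mul, map_inv₀, map_natCast, mul_mul_mul_comm _ _ (N : ℂ)⁻¹,
      ← Finset.mul_sum, Circle.sum_finsum_zpow_mul_conj_finsum_zpow hN₀]
    field_simp
  have hsqrt : ((Real.sqrt N : ℂ))⁻¹ * conj ((Real.sqrt N : ℂ))⁻¹ = (N : ℂ)⁻¹ := by
    rw [map_inv₀, conj_ofReal, ← mul_inv, ← ofReal_mul, Real.mul_self_sqrt N.cast_nonneg,
      ofReal_natCast]
  refine ⟨?_, gram⟩
  rw [← Circle.ae_comp_pow_iff hN₀ (P := fun z =>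
    (Matrix.of fun k l : Fin N => A k l z) ∈ Matrix.unitaryGroup (Fin N) ℂ)]
  refine Filter.eventually_congr (.of_forall fun z =>
    Matrix.mem_unitaryGroup_iff_of_mul_star_eq ?_)
  ext i j
  simp only [Matrix.mul_apply, Matrix.star_apply, Matrix.of_apply, RCLike.star_def, gram,
    map_mul, mul_mul_mul_comm _ (m i _), ← Finset.mul_sum, hsqrt]
  rw [Circle.sum_exp_mul_eq_finsum_mem_setOf_pow_eq fun w => m i w * conj (m j w)]

/-- With $A_{k,l}(z)=\frac1N\sum_{w^N=z}w^{-l}m_k(w)$, the matrix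
$\frac1{\sqrt N}(m_k(e^{2\pi il/N}z))$ is unitary a.e. iff $A(z)$ is unitary a.e.;
moreover $\sum_k A_{i,k}(z)\overline{A_{j,k}(z)}=\frac1N\sum_{w^N=z}m_i(w)\overline{m_j(w)}$. -/
theorem loop_matrix_unitary_iff (N : ℕ) (hN : 2 ≤ N) (μ : Measure Circle) [μ.IsHaarMeasure]
    [IsProbabilityMeasure μ] (m : Fin N → Circle → ℂ) (hm : ∀ i, MemLp (m i) ⊤ μ)
    (A : Fin N → Fin N → Circle → ℂ)
    (hA : ∀ k l z, A k l z
      = (N : ℂ)⁻¹ * ∑ᶠ w ∈ {w : Circle | w ^ N = z}, (w : ℂ) ^ (-(l : ℤ)) * m k w) :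
    ((∀ᵐ z ∂μ, (Matrix.of fun k l : Fin N =>
          ((Real.sqrt N : ℂ))⁻¹ * m k (Circle.exp (2 * Real.pi * l / N) * z))
        ∈ Matrix.unitaryGroup (Fin N) ℂ) ↔
      (∀ᵐ z ∂μ, (Matrix.of fun k l : Fin N => A k l z) ∈ Matrix.unitaryGroup (Fin N) ℂ)) ∧
    ∀ (i j : Fin N) (z : Circle), ∑ k, A i k z * conj (A j k z)
      = (N : ℂ)⁻¹ * ∑ᶠ w ∈ {w : Circle | w ^ N = z}, m i w * conj (m j w) :=
  loop_matrix_unitary_iff_general N hN μ m A hA
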